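/- For every real number x > 0, the integral H_{3,1}(x) = ∫₀^∞ (u+1)^{-3}(ux+1)^{-1} u^{5/2} du converges and equals π(3x + 9√x + 8)/(8(√x + 1)³ √x). -/

import Mathlib

open MeasureTheory Real Filter Set Topology

private lemma tendsto_sqrt_atTop' : Tendsto Real.sqrt atTop atTop := by
  have h : Real.sqrt = fun x : ℝ => x ^ ((1:ℝ)/2) := funext Real.sqrt_eq_rpow
  rw [h]; exact tendsto_rpow_atTop (by norm_num)

private lemma aux_tend (n : ℕ) : Tendsto (fun t : ℝ => t / (t^2+1)^(n+1)) atTop (𝓝 0) := by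
  apply squeeze_zero' ?_ ?_ tendsto_inv_atTop_zero
  · filter_upwards [eventually_ge_atTop (0:ℝ)] with t ht
    positivity
  · filter_upwards [eventually_ge_atTop (1:ℝ)] with t ht
    have h1 : (0:ℝ) < t := lt_of_lt_of_le one_pos ht
    have h2 : t^2 ≤ (t^2+1)^(n+1) := by
      calc t^2 ≤ t^2 + 1 := by linarith
        _ ≤ (t^2+1)^(n+1) := le_self_pow₀ (by nlinarith) (Nat.succ_ne_zero n)
    rw [div_le_iff₀ (by positivity), inv_mul_eq_div, le_div_iff₀ h1]
    nlinarith

private lemma master (s a b p q r : ℝ) (hs : 0 < s)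
    (hder : ∀ t : ℝ, 0 < t →
      a/(2*t*(t^2+1)) + b*s/(2*t*(s^2*t^2+1))
        + (p/(t^2+1)+q/(t^2+1)^2+r/(t^2+1)^3)/(2*t)
        - t*(p/(t^2+1)^2 + 2*q/(t^2+1)^3 + 3*r/(t^2+1)^4)
      = ((t^2+1)^3)⁻¹ * (t^2*s^2+1)⁻¹ * t^5)
    (hlim : a*(π/2) + b*(π/2) = π * (3*s^2 + 9*s + 8) / (8*(s+1)^3*s)) :
    IntegrableOn
      (fun u : ℝ => (u + 1) ^ (-3 : ℤ) * (u * s^2 + 1)⁻¹ * u ^ ((5 : ℝ) / 2))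
      (Set.Ioi 0) ∧
    ∫ u in Set.Ioi (0 : ℝ), (u + 1) ^ (-3 : ℤ) * (u * s^2 + 1)⁻¹ * u ^ ((5 : ℝ) / 2) =
      π * (3*s^2 + 9*s + 8) / (8*(s+1)^3*s) := by
  set G : ℝ → ℝ := fun u => a * Real.arctan (Real.sqrt u) + b * Real.arctan (s * Real.sqrt u)
      + Real.sqrt u * (p * (u+1)⁻¹ + q * ((u+1)^2)⁻¹ + r * ((u+1)^3)⁻¹) with hG
  have hGderiv : ∀ u ∈ Set.Ioi (0:ℝ), HasDerivAt G
      ((u + 1) ^ (-3 : ℤ) * (u * s^2 + 1)⁻¹ * u ^ ((5 : ℝ) / 2)) u := by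
    intro u hu
    rw [Set.mem_Ioi] at hu
    have ht0 : 0 < Real.sqrt u := Real.sqrt_pos.2 hu
    have ht2 : Real.sqrt u ^ 2 = u := Real.sq_sqrt hu.le
    have hu1 : u + 1 ≠ 0 := by positivity
    have hsqd : HasDerivAt Real.sqrt (1/(2*Real.sqrt u)) u := Real.hasDerivAt_sqrt hu.ne'
    have h1 : HasDerivAt (fun u : ℝ => Real.arctan (Real.sqrt u))
        ((1/(1 + Real.sqrt u ^ 2)) * (1/(2*Real.sqrt u))) u :=
      (Real.hasDerivAt_arctan _).comp u hsqd
    have h2 : HasDerivAt (fun u : ℝ => Real.arctan (s * Real.sqrt u))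
        ((1/(1 + (s * Real.sqrt u) ^ 2)) * (s * (1/(2*Real.sqrt u)))) u :=
      (Real.hasDerivAt_arctan _).comp u (hsqd.const_mul s)
    have hd1 : HasDerivAt (fun u : ℝ => u + 1) 1 u := (hasDerivAt_id u).add_const 1
    have e1 : HasDerivAt (fun u : ℝ => (u+1)⁻¹) (-(1)/(u+1)^2) u := hd1.inv hu1
    have e2 : HasDerivAt (fun u : ℝ => ((u+1)^2)⁻¹) (-(2*(u+1)^1*1)/((u+1)^2)^2) u :=
      (hd1.pow 2).inv (pow_ne_zero 2 hu1)
    have e3 : HasDerivAt (fun u : ℝ => ((u+1)^3)⁻¹) (-(3*(u+1)^2*1)/((u+1)^3)^2) u :=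
      (hd1.pow 3).inv (pow_ne_zero 3 hu1)
    have h3 := ((e1.const_mul p).add (e2.const_mul q)).add (e3.const_mul r)
    have h4 := hsqd.mul h3
    have H := ((h1.const_mul a).add (h2.const_mul b)).add h4
    convert H using 1
    case e'_4 => rfl
    case e'_5 => rfl
    case e'_8 => rfl
    have key := hder (Real.sqrt u) ht0
    rw [ht2] at key
    have h5 : u ^ ((5:ℝ)/2) = Real.sqrt u ^ 5 := by
      rw [Real.sqrt_eq_rpow, ← Real.rpow_natCast (u ^ ((1:ℝ)/2)) 5, ← Real.rpow_mul hu.le]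
      norm_num
    have h6 : ((u:ℝ) + 1) ^ (-3 : ℤ) = ((u+1)^3)⁻¹ := by
      rw [zpow_neg, show (3:ℤ) = ((3:ℕ):ℤ) by norm_num, zpow_natCast]
    rw [h5, h6, ← key]
    simp only [mul_pow, ht2, Pi.add_apply]
    have hY : (0:ℝ) < s^2*u+1 := by positivity
    have hY' : (0:ℝ) < u*s^2+1 := by positivity
    field_simp
    ring
  have hGcont : ContinuousWithinAt G (Set.Ici (0:ℝ)) 0 := by
    apply ContinuousAt.continuousWithinAt
    have hc1 : ContinuousAt (fun u : ℝ => u + 1) 0 := by fun_prop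
    have hne : ((0:ℝ) + 1) ≠ 0 := by norm_num
    exact (((Real.continuous_arctan.comp Real.continuous_sqrt).continuousAt.const_mul a).add
      ((Real.continuous_arctan.comp (continuous_const.mul Real.continuous_sqrt)).continuousAt.const_mul b)).add
      (Real.continuous_sqrt.continuousAt.mul
        ((((hc1.inv₀ hne).const_mul p).add
          (((hc1.pow 2).inv₀ (by norm_num)).const_mul q)).add
          (((hc1.pow 3).inv₀ (by norm_num)).const_mul r)))
  have hG0 : G 0 = 0 := by simp [hG]
  have hlimG : Tendsto G atTop (𝓝 (π * (3*s^2 + 9*s + 8) / (8*(s+1)^3*s))) := by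
    rw [← hlim]
    have h1 : Tendsto (fun u : ℝ => Real.arctan (Real.sqrt u)) atTop (𝓝 (π/2)) :=
      (Real.tendsto_arctan_atTop.mono_right nhdsWithin_le_nhds).comp tendsto_sqrt_atTop'
    have h2 : Tendsto (fun u : ℝ => Real.arctan (s * Real.sqrt u)) atTop (𝓝 (π/2)) :=
      (Real.tendsto_arctan_atTop.mono_right nhdsWithin_le_nhds).comp
        (tendsto_sqrt_atTop'.const_mul_atTop hs)
    have h3 : Tendsto (fun u : ℝ => Real.sqrt u * (p * (u+1)⁻¹ + q * ((u+1)^2)⁻¹ + r * ((u+1)^3)⁻¹))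
        atTop (𝓝 0) := by
      have key : Tendsto (fun t : ℝ => t * (p * (t^2+1)⁻¹ + q * ((t^2+1)^2)⁻¹ + r * ((t^2+1)^3)⁻¹))
          atTop (𝓝 0) := by
        have h := (((aux_tend 0).const_mul p).add ((aux_tend 1).const_mul q)).add
          ((aux_tend 2).const_mul r)
        simp only [mul_zero, add_zero] at h
        convert h using 2 with t
        push_cast
        ring
      apply (key.comp tendsto_sqrt_atTop').congr'
      filter_upwards [eventually_ge_atTop (0:ℝ)] with u hu
      simp only [Function.comp_apply, Real.sq_sqrt hu]
    have h := ((h1.const_mul a).add (h2.const_mul b)).add h3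
    simpa using h
  have hpos : ∀ u ∈ Set.Ioi (0:ℝ),
      0 ≤ (u + 1) ^ (-3 : ℤ) * (u * s^2 + 1)⁻¹ * u ^ ((5 : ℝ) / 2) := by
    intro u hu
    rw [Set.mem_Ioi] at hu
    have h1 : (0:ℝ) < u + 1 := by linarith
    have h2 : (0:ℝ) < u * s^2 + 1 := by positivity
    positivity
  constructor
  · exact integrableOn_Ioi_deriv_of_nonneg hGcont hGderiv hpos hlimG
  · rw [integral_Ioi_of_hasDerivAt_of_nonneg hGcont hGderiv hpos hlimG, hG0, sub_zero]

/-- For every real `x > 0`, the integral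
`H₃₁(x) = ∫₀^∞ (u+1)⁻³ (ux+1)⁻¹ u^(5/2) du` converges and equals
`π(3x + 9√x + 8) / (8(√x+1)³√x)`. -/
theorem H_three_one_eval (x : ℝ) (hx : 0 < x) :
    IntegrableOn
      (fun u : ℝ => (u + 1) ^ (-3 : ℤ) * (u * x + 1)⁻¹ * u ^ ((5 : ℝ) / 2))
      (Set.Ioi 0) ∧
    ∫ u in Set.Ioi (0 : ℝ), (u + 1) ^ (-3 : ℤ) * (u * x + 1)⁻¹ * u ^ ((5 : ℝ) / 2) =
      Real.pi * (3 * x + 9 * Real.sqrt x + 8) /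
        (8 * (Real.sqrt x + 1) ^ 3 * Real.sqrt x) := by
  obtain ⟨s, hs0, rfl⟩ : ∃ s : ℝ, 0 < s ∧ s ^ 2 = x :=
    ⟨Real.sqrt x, Real.sqrt_pos.2 hx, Real.sq_sqrt hx.le⟩
  rw [Real.sqrt_sq hs0.le]
  rcases eq_or_ne s 1 with rfl | hs1
  · have h := master 1 (5/8) 0 (-11/8) (13/12) (-1/3) one_pos ?_ ?_
    · exact h
    · intro t ht
      have h1 : t^2+1 ≠ 0 := by positivity
      have h2 : (1:ℝ)^2*t^2+1 ≠ 0 := by positivity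
      field_simp
      ring
    · norm_num
      ring
  · have hd : s^2 - 1 ≠ 0 := by
      intro h
      have hs2 : (s-1)*(s+1) = 0 := by linarith [h]
      rcases mul_eq_zero.1 hs2 with h' | h'
      · exact hs1 (by linarith)
      · linarith
    have h := master s (2*(15/(8*(s^2-1)) - 5*s^2/(2*(s^2-1)^2) + s^4/(s^2-1)^3))
      (-2/(s*(s^2-1)^3)) (-9/(4*(s^2-1)) + s^2/(s^2-1)^2) (1/(2*(s^2-1))) 0 hs0 ?_ ?_
    · exact h
    · intro t ht
      have h1 : t^2+1 ≠ 0 := by positivity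
      have h2 : s^2*t^2+1 ≠ 0 := by positivity
      field_simp
      ring
    · have hsp : s + 1 ≠ 0 := by positivity
      field_simp
      ring
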